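/- Let g ∈ so(3) with ⟨g,g⟩ = 1 and let Z be a complex 3×3 matrix satisfying Z = [W, g] for some W, gZg = 0, Zg² + g²Z + Z = 0 (as follows when Z = ∂̄_A g). Then the equation i Z g = −Z g² holds if and only if g(Z)g + g² Z + Z = i Z g; equivalently, writing π = −g(g+i·Id)/2 and π⊥ = Id − π, the condition π⊥ (−(1/2)(Z g + g Z + i Z)) π = 0 is equivalent to i Z g = −Z g². -/
import Mathlib


open Matrix

private lemma aux3' (a b c : ℝ) (h : a^2+b^2+c^2 = 1) :
    (!![0,a,b;-a,0,c;-b,-c,0])^3 = -(!![0,a,b;-a,0,c;-b,-c,0]) := by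
  rw [pow_succ, pow_two, Matrix.mul_fin_three, Matrix.mul_fin_three]
  ext i j
  fin_cases i <;> fin_cases j <;> simp [Matrix.neg_apply] <;>
  first
    | ring1
    | linear_combination a*h
    | linear_combination (-a)*h
    | linear_combination b*h
    | linear_combination (-b)*h
    | linear_combination c*h
    | linear_combination (-c)*h

set_option maxHeartbeats 1000000 in
theorem holomorphicity_projection_equiv (g : Matrix (Fin 3) (Fin 3) ℝ)
    (hg : gᵀ = -g) (hnorm : (g * gᵀ).trace / 2 = 1)
    (Z : Matrix (Fin 3) (Fin 3) ℂ)
    (hW : ∃ W : Matrix (Fin 3) (Fin 3) ℂ,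
      Z = W * g.map Complex.ofReal - g.map Complex.ofReal * W)
    (hgZg : g.map Complex.ofReal * Z * g.map Complex.ofReal = 0)
    (hZ : Z * (g.map Complex.ofReal) ^ 2 + (g.map Complex.ofReal) ^ 2 * Z + Z = 0) :
    let G : Matrix (Fin 3) (Fin 3) ℂ := g.map Complex.ofReal
    let π : Matrix (Fin 3) (Fin 3) ℂ := -(2⁻¹ : ℂ) • (G * (G + Complex.I • 1))
    (Complex.I • (Z * G) = -(Z * G ^ 2) ↔
        G * Z * G + G ^ 2 * Z + Z = Complex.I • (Z * G)) ∧
    ((1 - π) * (-(2⁻¹ : ℂ) • (Z * G + G * Z + Complex.I • Z)) * π = 0 ↔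
        Complex.I • (Z * G) = -(Z * G ^ 2)) := by
  intro G π
  -- entrywise facts about g
  have he : ∀ i j, g i j = - g j i := fun i j => by
    have := congrFun (congrFun hg j) i; simpa using this
  have h00 : g 0 0 = 0 := by have := he 0 0; linarith
  have h11 : g 1 1 = 0 := by have := he 1 1; linarith
  have h22 : g 2 2 = 0 := by have := he 2 2; linarith
  have h10 : g 1 0 = -g 0 1 := he 1 0
  have h20 : g 2 0 = -g 0 2 := he 2 0
  have h21 : g 2 1 = -g 1 2 := he 2 1
  have hgm : g = !![0, g 0 1, g 0 2; -(g 0 1), 0, g 1 2; -(g 0 2), -(g 1 2), 0] := by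
    ext i j
    fin_cases i <;> fin_cases j <;> simp <;>
      first | rfl | exact h00 | exact h11 | exact h22 | exact h10 | exact h20 | exact h21
  simp only [Matrix.trace, Matrix.mul_apply, Fin.sum_univ_three, Matrix.transpose_apply,
    Matrix.diag_apply, h00, h11, h22, h10, h20, h21] at hnorm
  have hn : (g 0 1)^2 + (g 0 2)^2 + (g 1 2)^2 = 1 := by linear_combination hnorm
  have hg3 : g ^ 3 = -g := by rw [hgm]; exact aux3' _ _ _ hn
  have hG3 : G ^ 3 = -G := by
    have h1 : G = (Complex.ofRealHom.mapMatrix g) := rfl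
    rw [h1, ← map_pow, hg3, map_neg]
  have z1 : G * Z * G = 0 := hgZg
  have hZ' : Z * G ^ 2 + G ^ 2 * Z + Z = 0 := hZ
  have e1 : Z * G ^ 3 = -(Z * G) := by rw [hG3, mul_neg]
  have z2 : G * Z * G ^ 2 = 0 := by
    linear_combination (norm := (noncomm_ring; all_goals (match_scalars <;> (try ring_nf; try norm_num [Complex.I_sq, zsmul_eq_mul]; try ring1)))) z1 * G
  have z4 : G ^ 2 * Z * G = 0 := by
    linear_combination (norm := (noncomm_ring; all_goals (match_scalars <;> (try ring_nf; try norm_num [Complex.I_sq, zsmul_eq_mul]; try ring1)))) hZ' * G - e1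
  have z5 : G ^ 2 * Z * G ^ 2 = 0 := by
    linear_combination (norm := (noncomm_ring; all_goals (match_scalars <;> (try ring_nf; try norm_num [Complex.I_sq, zsmul_eq_mul]; try ring1)))) hZ' * G ^ 2 - e1 * G
  have hπ : π = -(2⁻¹ : ℂ) • (G * (G + Complex.I • 1)) := rfl
  have step1 : (-(2⁻¹ : ℂ) • (Z * G + G * Z + Complex.I • Z)) * π
      = (2⁻¹ : ℂ) • (Complex.I • (Z * G ^ 2) - Z * G) := by
    rw [hπ]
    linear_combination (norm := (noncomm_ring; all_goals (match_scalars <;> (try ring_nf; try norm_num [Complex.I_sq, zsmul_eq_mul]; try ring1))))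
      (4⁻¹ : ℂ) • e1 + (4⁻¹ : ℂ) • z2 + ((4⁻¹ : ℂ) * Complex.I) • z1
  have step2 : G * ((2⁻¹ : ℂ) • (Complex.I • (Z * G ^ 2) - Z * G)) = 0 := by
    linear_combination (norm := (noncomm_ring; all_goals (match_scalars <;> (try ring_nf; try norm_num [Complex.I_sq, zsmul_eq_mul]; try ring1))))
      ((2⁻¹ : ℂ) * Complex.I) • z2 - (2⁻¹ : ℂ) • z1
  have step3 : G ^ 2 * ((2⁻¹ : ℂ) • (Complex.I • (Z * G ^ 2) - Z * G)) = 0 := by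
    linear_combination (norm := (noncomm_ring; all_goals (match_scalars <;> (try ring_nf; try norm_num [Complex.I_sq, zsmul_eq_mul]; try ring1))))
      ((2⁻¹ : ℂ) * Complex.I) • z5 - (2⁻¹ : ℂ) • z4
  have key : (1 - π) * (-(2⁻¹ : ℂ) • (Z * G + G * Z + Complex.I • Z)) * π
      = (2⁻¹ : ℂ) • (Complex.I • (Z * G ^ 2) - Z * G) := by
    rw [hπ] at step1 ⊢
    linear_combination (norm := (noncomm_ring; all_goals (match_scalars <;> (try ring_nf; try norm_num [Complex.I_sq, zsmul_eq_mul]; try ring1))))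
      (1 - -(2⁻¹ : ℂ) • (G * (G + Complex.I • 1))) * step1
        + (2⁻¹ : ℂ) • step3 + ((2⁻¹ : ℂ) * Complex.I) • step2
  constructor
  · constructor
    · intro h
      linear_combination (norm := (noncomm_ring; all_goals (match_scalars <;> (try ring_nf; try norm_num [Complex.I_sq, zsmul_eq_mul]; try ring1)))) z1 + hZ' - h
    · intro h
      linear_combination (norm := (noncomm_ring; all_goals (match_scalars <;> (try ring_nf; try norm_num [Complex.I_sq, zsmul_eq_mul]; try ring1)))) z1 + hZ' - h
  · rw [key]
    constructor
    · intro h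
      linear_combination (norm := (noncomm_ring; all_goals (match_scalars <;> (try ring_nf; try norm_num [Complex.I_sq, zsmul_eq_mul]; try ring1)))) (-2 : ℂ) • (h * G) + Complex.I • e1
    · intro h
      linear_combination (norm := (noncomm_ring; all_goals (match_scalars <;> (try ring_nf; try norm_num [Complex.I_sq, zsmul_eq_mul]; try ring1)))) (2⁻¹ : ℂ) • (h * G) - (2⁻¹ : ℂ) • e1
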